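/- Assume κ > ω, and assume that δ < κ, or θ < κ, or κ is not a limit cardinal. Then there exists a [δ]^{<θ}-normal ideal on P_κ(λ) if and only if |P_θ̄(μ)| < κ for every cardinal μ with μ < κ and μ ≤ δ. -/

import Mathlib

/-!
Necessity: if `κ ≤ |P_θ̄(μ)|` for some `μ < κ` with `μ ≤ δ`, index the sets `e ∈ P_ν(μ)`,
`ν = min(θ̄, μ⁺)`, by ordinals `ξ < κ`. Every `a ∈ P_κ(λ)` containing `ν ∪ μ` omits some `ξ`,
and `e_ξ ∈ P_{|a ∩ θ|}(a ∩ δ)`; so `P_κ(λ)` is a diagonal union of non-cofinal sets and lies in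
every `[δ]^{<θ}`-normal ideal.

Sufficiency: the sets that avoid, for some `f : [P_θ(δ)]^{<ω} → P_κ(λ)`, every closure point `a`
of `f` with `a ∩ θ ≠ ∅` form a `[δ]^{<θ}`-normal ideal. It is proper because closing under `f`
along a chain of regular length `ρ < κ` with `ρ ≥ min(θ̄, |δ|⁺)` yields a closure point in
`P_κ(λ)`: the hypothesis bounds by `κ` the number of sets `e` to close under at each step. Such a
`ρ` exists by the case assumption and, when `θ̄` is singular and `θ̄⁺ = κ`, by König's theorem
`θ̄ < θ̄^{cf θ̄} ≤ |P_θ̄(θ̄)|`.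
-/

open Cardinal Set

namespace PklNormal

/-- `P_κ(l)`: the collection of subsets of (the set of ordinals below) `l`
of cardinality `< κ`. -/
def PSet (κ : Cardinal.{0}) (l : Ordinal.{0}) : Set (Set Ordinal.{0}) :=
  {a | a ⊆ Set.Iio l ∧ #↥a < Cardinal.lift.{1} κ}

/-- `e ∈ P_{|a ∩ σ|}(a ∩ γ)`. -/
def inP (σ : Cardinal.{0}) (γ : Ordinal.{0}) (a e : Set Ordinal.{0}) : Prop :=
  e ⊆ a ∩ Set.Iio γ ∧ #↥e < #↥(a ∩ Set.Iio σ.ord)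

/-- The collection `I_{κ,l}` of non-cofinal subsets of `P_κ(l)`. -/
def Ikl (κ : Cardinal.{0}) (l : Ordinal.{0}) : Set (Set (Set Ordinal.{0})) :=
  {B | B ⊆ PSet κ l ∧ ∃ a ∈ PSet κ l, ∀ b ∈ B, ¬ a ⊆ b}

/-- An ideal on `P_κ(l)`. -/
structure IsIdeal (κ : Cardinal.{0}) (l : Ordinal.{0})
    (K : Set (Set (Set Ordinal.{0}))) : Prop where
  mem_subset : ∀ B ∈ K, B ⊆ PSet κ l
  subset_mem : ∀ B ∈ K, ∀ C ⊆ B, C ∈ K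
  sUnion_mem : ∀ Y ⊆ K, Y.Nonempty → #↥Y < Cardinal.lift.{1} κ → ⋃₀ Y ∈ K
  nonCofinal_subset : Ikl κ l ⊆ K
  univ_not_mem : PSet κ l ∉ K

/-- `K⁺`: the subsets of `P_κ(l)` not in `K`. -/
def plus (κ : Cardinal.{0}) (l : Ordinal.{0}) (K : Set (Set (Set Ordinal.{0}))) :
    Set (Set (Set Ordinal.{0})) :=
  {B | B ⊆ PSet κ l ∧ B ∉ K}

/-- `K*`: the subsets of `P_κ(l)` whose complement is in `K`. -/
def star (κ : Cardinal.{0}) (l : Ordinal.{0}) (K : Set (Set (Set Ordinal.{0}))) :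
    Set (Set (Set Ordinal.{0})) :=
  {B | B ⊆ PSet κ l ∧ PSet κ l \ B ∈ K}

/-- `K|A`. -/
def restrict (κ : Cardinal.{0}) (l : Ordinal.{0}) (K : Set (Set (Set Ordinal.{0})))
    (A : Set (Set Ordinal.{0})) : Set (Set (Set Ordinal.{0})) :=
  {B | B ⊆ PSet κ l ∧ B ∩ A ∈ K}

/-- `∇^{[γ]^{<σ}} J`. -/
def nabla (κ : Cardinal.{0}) (l : Ordinal.{0}) (σ : Cardinal.{0}) (γ : Ordinal.{0})
    (J : Set (Set (Set Ordinal.{0}))) : Set (Set (Set Ordinal.{0})) :=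
  {B | ∃ F : Set Ordinal.{0} → Set (Set Ordinal.{0}),
    (∀ e ∈ PSet σ γ, F e ∈ J) ∧
    B ⊆ {a | a ∈ PSet κ l ∧ a ∩ Set.Iio σ.ord = ∅} ∪
      ⋃ e ∈ PSet σ γ, {a | a ∈ F e ∧ inP σ γ a e}}

/-- `J` is `[γ]^{<σ}`-normal. -/
def IsNormal (κ : Cardinal.{0}) (l : Ordinal.{0}) (σ : Cardinal.{0}) (γ : Ordinal.{0})
    (J : Set (Set (Set Ordinal.{0}))) : Prop :=
  J = nabla κ l σ γ J

def IsNormalIdeal (κ : Cardinal.{0}) (l : Ordinal.{0}) (σ : Cardinal.{0}) (γ : Ordinal.{0})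
    (J : Set (Set (Set Ordinal.{0}))) : Prop :=
  IsIdeal κ l J ∧ IsNormal κ l σ γ J

/-- `N` is the smallest `[γ]^{<σ}`-normal ideal on `P_κ(l)`. -/
def IsLeastNormalIdeal (κ : Cardinal.{0}) (l : Ordinal.{0}) (σ : Cardinal.{0}) (γ : Ordinal.{0})
    (N : Set (Set (Set Ordinal.{0}))) : Prop :=
  IsNormalIdeal κ l σ γ N ∧ ∀ J, IsNormalIdeal κ l σ γ J → N ⊆ J

/-- `∇^δ K`, the ordinal-indexed diagonal union. -/
def nablaOrd (κ : Cardinal.{0}) (l : Ordinal.{0}) (δ : Ordinal.{0})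
    (K : Set (Set (Set Ordinal.{0}))) : Set (Set (Set Ordinal.{0})) :=
  {B | ∃ F : Ordinal.{0} → Set (Set Ordinal.{0}),
    (∀ α < δ, F α ∈ K) ∧
    B ⊆ {a | a ∈ PSet κ l ∧ (0 : Ordinal) ∉ a} ∪
      ⋃ α ∈ Set.Iio δ, {a | a ∈ F α ∧ α ∈ a}}

/-- `J` is `δ`-normal. -/
def IsOrdNormal (κ : Cardinal.{0}) (l : Ordinal.{0}) (δ : Ordinal.{0})
    (J : Set (Set (Set Ordinal.{0}))) : Prop :=
  J = nablaOrd κ l δ J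

/-- `θ̄`: equals `θ` if `θ < κ`, or if `θ = κ` and `κ` is a limit cardinal;
equals `ν` if `θ = κ = ν⁺`. -/
noncomputable def thetaBar (κ θ : Cardinal.{0}) : Cardinal.{0} :=
  haveI := Classical.propDecidable (θ < κ ∨ Order.IsSuccLimit κ)
  if θ < κ ∨ Order.IsSuccLimit κ then θ else sSup {ν | Order.succ ν = κ}

/-- `cof(K)`: the least number of generators of `K`. -/
noncomputable def cofIdeal (K : Set (Set (Set Ordinal.{0}))) : Cardinal.{1} :=
  sInf {c | ∃ S ⊆ K, #↥S = c ∧ ∀ B ∈ K, ∃ C ∈ S, B ⊆ C}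

/-- The dominating number `𝔡^μ_{κ,l}`. -/
noncomputable def dNum (κ : Cardinal.{0}) (l : Ordinal.{0}) (μ : Cardinal.{1}) : Cardinal.{1} :=
  sInf {c | ∃ F : Set (μ.ord.ToType → Set Ordinal.{0}),
    #↥F = c ∧ (∀ f ∈ F, ∀ i, f i ∈ PSet κ l) ∧
    ∀ g : μ.ord.ToType → Set Ordinal.{0}, (∀ i, g i ∈ PSet κ l) →
      ∃ f ∈ F, ∀ i, g i ⊆ f i}

/-- `u(ρ,μ)`: the least cardinality of a cofinal subset of `(P_ρ(μ), ⊆)`. -/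
noncomputable def uNum (ρ μ : Cardinal.{0}) : Cardinal.{1} :=
  sInf {c | ∃ X ⊆ PSet ρ μ.ord, #↥X = c ∧ ∀ e ∈ PSet ρ μ.ord, ∃ x ∈ X, e ⊆ x}

/-- `cov(lam, ν, ν, 2)`: the least cardinality of an `X ⊆ P_ν(lam)` such that every
member of `P_ν(lam)` is contained in a member of `X`. -/
noncomputable def covNum (lam ν : Cardinal.{0}) : Cardinal.{1} :=
  sInf {c | ∃ X ⊆ PSet ν lam.ord, #↥X = c ∧ ∀ e ∈ PSet ν lam.ord, ∃ x ∈ X, e ⊆ x}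

/-- `C` is closed unbounded in `l`. -/
def IsClubIn (C : Set Ordinal.{0}) (l : Ordinal.{0}) : Prop :=
  C ⊆ Set.Iio l ∧ (∀ p < l, ∃ q ∈ C, p < q) ∧
    (∀ o < l, Order.IsSuccLimit o → (∀ p < o, ∃ q ∈ C, p < q ∧ q < o) → o ∈ C)

/-- `κ` is a Mahlo cardinal: the set of regular cardinals below `κ` is stationary in `κ`. -/
def IsMahlo (κ : Cardinal.{0}) : Prop :=
  ∀ C : Set Ordinal.{0}, IsClubIn C κ.ord →
    ∃ o ∈ C, ∃ ρ : Cardinal.{0}, ρ.IsRegular ∧ ρ.ord = o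

universe u

open Order

theorem mk_Iio_ord (c : Cardinal.{u}) : #(Iio c.ord) = lift.{u + 1} c := by
  rw [mk_Iio_ordinal, card_ord]

theorem mk_setOf_list_forall_mem_le {α : Type u} (S : Set α) :
    #{l : List α | ∀ x ∈ l, x ∈ S} ≤ max ℵ₀ #S := by
  have hinj : Function.Injective
      (fun l : {l : List α | ∀ x ∈ l, x ∈ S} => l.1.attachWith (· ∈ S) l.2) := by
    intro l₁ l₂ h
    simpa [List.map_attachWith, Subtype.ext_iff] using congrArg (List.map Subtype.val) h
  exact (mk_le_of_injective hinj).trans (mk_list_le_max _)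

theorem mk_setOf_subset_mk_lt_le {α β : Type u} {y : Set α} {z : Set β} (h : #y ≤ #z)
    (c : Cardinal.{u}) : #{e | e ⊆ y ∧ #e < c} ≤ #{e | e ⊆ z ∧ #e < c} := by
  obtain ⟨g⟩ := h
  let φ : Set α → Set β := fun e => ((↑) : z → β) '' (g '' ((↑) ⁻¹' e : Set y))
  have hφ : ∀ e ⊆ y, #(φ e) = #e := fun e he => by
    rw [mk_image_eq Subtype.val_injective, mk_image_eq g.injective,
      mk_preimage_of_injective_of_subset_range _ _ Subtype.val_injective (by simpa using he)]
  refine mk_le_of_injective (f := fun e => ⟨φ e.1, Subtype.coe_image_subset _ _,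
    (hφ _ e.2.1).trans_lt e.2.2⟩) ?_
  rintro ⟨e₁, he₁, _⟩ ⟨e₂, he₂, _⟩ heq
  have h' : ((↑) ⁻¹' e₁ : Set y) = (↑) ⁻¹' e₂ :=
    g.injective.image_injective (Subtype.val_injective.image_injective (congrArg Subtype.val heq))
  rw [Subtype.preimage_coe_eq_preimage_coe_iff, inter_eq_right.2 he₁, inter_eq_right.2 he₂] at h'
  exact Subtype.ext h'

section TransfiniteIterate

variable {α : Type (u + 1)} (Φ : Set α → Set α)

def transfiniteIterate (i : Ordinal.{u}) : Set α :=
  Φ (⋃ j : Iio i, transfiniteIterate j.1)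
termination_by i
decreasing_by exact j.2

theorem transfiniteIterate_eq (i : Ordinal.{u}) :
    transfiniteIterate Φ i = Φ (⋃ j : Iio i, transfiniteIterate Φ j.1) := by
  rw [transfiniteIterate]

theorem monotone_transfiniteIterate (hΦ : ∀ x : Set α, x ⊆ Φ x) :
    Monotone (transfiniteIterate Φ) := by
  intro j i hji
  rcases hji.eq_or_lt with rfl | hlt
  · rfl
  · rw [transfiniteIterate_eq Φ i]
    exact (subset_iUnion (fun k : Iio i => transfiniteIterate Φ k.1) ⟨j, hlt⟩).trans (hΦ _)

theorem transfiniteIterate_subset {s : Set α} (hs : ∀ x : Set α, x ⊆ s → Φ x ⊆ s)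
    (i : Ordinal.{u}) : transfiniteIterate Φ i ⊆ s := by
  induction i using WellFoundedLT.induction with
  | ind i ih =>
    rw [transfiniteIterate_eq]
    exact hs _ (iUnion_subset fun j => ih j.1 j.2)

theorem mk_transfiniteIterate_lt {κ : Cardinal.{u + 1}} (hκ : κ.IsRegular)
    (hΦ : ∀ x : Set α, #x < κ → #(Φ x) < κ) {i : Ordinal.{u}} (hi : lift.{u + 1} i.card < κ) :
    #(transfiniteIterate Φ i) < κ := by
  induction i using WellFoundedLT.induction with
  | ind i ih =>
    rw [transfiniteIterate_eq]
    have hIio : #(Iio i) < κ := by rwa [mk_Iio_ordinal]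
    refine hΦ _ ((card_iUnion_lt_iff_forall_of_isRegular hκ hIio).2 fun j => ih j.1 j.2 ?_)
    exact (lift_le.2 (Ordinal.card_le_card j.2.le)).trans_lt hi

theorem subset_iUnion_transfiniteIterate {ρ : Cardinal.{u}} (hρ : ρ.IsRegular)
    (hmono : Monotone Φ) (hΦ : ∀ x : Set α, x ⊆ Φ x) {s : Set α}
    (hs : s ⊆ ⋃ i : Iio ρ.ord, transfiniteIterate Φ i) (hsρ : #s < lift.{u + 1} ρ) :
    Φ s ⊆ ⋃ i : Iio ρ.ord, transfiniteIterate Φ i := by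
  have hstage : ∀ x : s, ∃ i < ρ.ord, x.1 ∈ transfiniteIterate Φ i := fun x => by
    obtain ⟨i, hi⟩ := mem_iUnion.1 (hs x.2)
    exact ⟨i, i.2, hi⟩
  choose stage hstage_lt hmem using hstage
  set j := sSup (range stage)
  have hj : j < ρ.ord := by
    refine Ordinal.sSup_lt_of_lt_cof (mk_range_le.trans_lt ?_) ?_
    · rwa [← Ordinal.lift_cof, hρ.cof_ord]
    · rintro _ ⟨x, rfl⟩
      exact hstage_lt x
  have hbdd : BddAbove (range stage) := ⟨ρ.ord, by rintro _ ⟨x, rfl⟩; exact (hstage_lt x).le⟩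
  have hs_sub : s ⊆ transfiniteIterate Φ j := fun x hx =>
    monotone_transfiniteIterate Φ hΦ (le_csSup hbdd ⟨⟨x, hx⟩, rfl⟩) (hmem ⟨x, hx⟩)
  have hsucc : succ j < ρ.ord := (isSuccLimit_ord hρ.aleph0_le).succ_lt hj
  calc Φ s ⊆ Φ (⋃ i : Iio (succ j), transfiniteIterate Φ i) :=
        hmono (hs_sub.trans (subset_iUnion_of_subset (⟨j, lt_succ j⟩ : Iio (succ j)) subset_rfl))
    _ = transfiniteIterate Φ (succ j) := (transfiniteIterate_eq Φ _).symm
    _ ⊆ ⋃ i : Iio ρ.ord, transfiniteIterate Φ i :=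
        subset_iUnion_of_subset (⟨succ j, hsucc⟩ : Iio ρ.ord) subset_rfl

end TransfiniteIterate

theorem lift_lt_mk_PSet_self {σ : Cardinal.{0}} (hσ : ℵ₀ ≤ σ) (hsing : ¬σ.IsRegular) :
    lift.{1} σ < #(PSet σ σ.ord) := by
  set r := σ.ord.cof
  have hrσ : r < σ := (Ordinal.cof_ord_le σ).lt_of_ne fun h => hsing ⟨hσ, h.ge⟩
  have hr : r ≠ 0 := by
    simpa [r, Ordinal.cof_eq_zero] using (aleph0_pos.trans_le hσ).ne'
  let R := Iio r.ord
  let S := Iio σ.ord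
  have hgraph : #(R → S) ≤ #{e | e ⊆ (univ : Set (R × S)) ∧ #e < lift.{1} σ} := by
    refine mk_le_of_injective (f := fun g => ⟨range fun i => (i, g i), subset_univ _,
      mk_range_le.trans_lt ?_⟩) ?_
    · rw [mk_Iio_ord]
      exact lift_lt.2 hrσ
    · intro g₁ g₂ h
      funext i
      have hrange : range (fun i => (i, g₁ i)) = range fun i => (i, g₂ i) :=
        congrArg Subtype.val h
      obtain ⟨j, hj⟩ : (i, g₁ i) ∈ range fun i => (i, g₂ i) := hrange ▸ mem_range_self i
      obtain ⟨rfl, hg⟩ := Prod.ext_iff.1 hj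
      exact hg.symm
  have huniv : #(univ : Set (R × S)) ≤ #S := by
    rw [mk_univ, mk_prod, lift_id, lift_id, mk_Iio_ord, mk_Iio_ord, ← lift_mul,
      mul_comm, mul_eq_left hσ hrσ.le hr]
  calc lift.{1} σ < lift.{1} σ ^ lift.{1} r := by
        rw [← lift_power]
        exact lift_lt.2 (lt_power_cof_ord hσ)
    _ = #(R → S) := by rw [← power_def, mk_Iio_ord, mk_Iio_ord]
    _ ≤ _ := hgraph
    _ ≤ #(PSet σ σ.ord) := mk_setOf_subset_mk_lt_le huniv _

section ThetaBar

variable {κ θ c : Cardinal.{0}}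

theorem thetaBar_eq_self (h : θ < κ ∨ IsSuccLimit κ) : thetaBar κ θ = θ :=
  if_pos h

theorem succ_thetaBar (hκ : κ ≠ 0) (h : ¬(θ < κ ∨ IsSuccLimit κ)) :
    succ (thetaBar κ θ) = κ := by
  have hpre : ¬IsSuccPrelimit κ := by
    rcases not_isSuccLimit_iff.1 fun hl => h (Or.inr hl) with hmin | hpre
    · exact absurd (isMin_iff_eq_bot.1 hmin) hκ
    · exact hpre
  obtain ⟨ν, rfl⟩ := mem_range_succ_of_not_isSuccPrelimit hpre
  have hpred : {ν' | succ ν' = succ ν} = {ν} := by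
    ext ν'
    simp [succ_eq_succ_iff]
  rw [thetaBar, if_neg h, hpred, csSup_singleton]

theorem thetaBar_le (hκ : κ ≠ 0) : thetaBar κ θ ≤ θ := by
  by_cases h : θ < κ ∨ IsSuccLimit κ
  · rw [thetaBar_eq_self h]
  · calc thetaBar κ θ ≤ succ (thetaBar κ θ) := le_succ _
      _ = κ := succ_thetaBar hκ h
      _ ≤ θ := not_lt.1 fun hθ => h (Or.inl hθ)

theorem thetaBar_lt (hκ : κ ≠ 0) (h : θ < κ ∨ ¬IsSuccLimit κ) : thetaBar κ θ < κ := by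
  by_cases h' : θ < κ ∨ IsSuccLimit κ
  · rw [thetaBar_eq_self h']
    tauto
  · conv_rhs => rw [← succ_thetaBar hκ h']
    exact lt_succ _

theorem min_le_thetaBar (hκ : κ ≠ 0) (hc : c < κ) : min c θ ≤ thetaBar κ θ := by
  by_cases h : θ < κ ∨ IsSuccLimit κ
  · rw [thetaBar_eq_self h]
    exact min_le_right _ _
  · rw [← succ_thetaBar hκ h, lt_succ_iff] at hc
    exact (min_le_left _ _).trans hc

theorem min_thetaBar_succ_lt (hκ : κ ≠ 0) (h : c < κ ∨ θ < κ ∨ ¬IsSuccLimit κ) :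
    min (thetaBar κ θ) (succ c) < κ := by
  by_cases h' : θ < κ ∨ ¬IsSuccLimit κ
  · exact (min_le_left _ _).trans_lt (thetaBar_lt hκ h')
  · push Not at h'
    have hc : c < κ := h.resolve_right fun h'' => h''.elim h'.1.not_gt (· h'.2)
    exact (min_le_right _ _).trans_lt (h'.2.succ_lt hc)

end ThetaBar

theorem mk_setOf_subset_mk_lt_lt_of_mk_PSet_lt {κ σ : Cardinal.{0}} {δ : Ordinal.{0}}
    (hC : ∀ μ < κ, μ.ord ≤ δ → #(PSet σ μ.ord) < lift.{1} κ) {y : Set Ordinal.{0}}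
    (hyδ : y ⊆ Iio δ) (hy : #y < lift.{1} κ) :
    #{e | e ⊆ y ∧ #e < lift.{1} σ} < lift.{1} κ := by
  obtain ⟨μ, hμ⟩ := mem_range_lift_of_le hy.le
  have hμδ : lift.{1} μ ≤ lift.{1} δ.card := by
    rw [hμ, ← mk_Iio_ordinal]
    exact mk_le_mk_of_subset hyδ
  refine (mk_setOf_subset_mk_lt_le (z := Iio μ.ord) (by rw [mk_Iio_ord, hμ]) _).trans_lt ?_
  exact hC μ (lift_lt.1 (hμ ▸ hy)) ((ord_le_ord.2 (lift_le.1 hμδ)).trans (ord_card_le δ))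

theorem exists_isRegular_min_le_lt {κ σ : Cardinal.{0}} {δ : Ordinal.{0}} (hκω : ℵ₀ < κ)
    (hlt : min σ (succ δ.card) < κ)
    (hC : ∀ μ < κ, μ.ord ≤ δ → #(PSet σ μ.ord) < lift.{1} κ) :
    ∃ ρ : Cardinal.{0}, ρ.IsRegular ∧ min σ (succ δ.card) ≤ ρ ∧ ρ < κ := by
  by_cases hω : min σ (succ δ.card) ≤ ℵ₀
  · exact ⟨ℵ₀, isRegular_aleph0, hω, hκω⟩
  by_cases hreg : (min σ (succ δ.card)).IsRegular
  · exact ⟨_, hreg, le_rfl, hlt⟩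
  -- Successors of infinite cardinals are regular, so the minimum is a singular `σ ≤ |δ|`.
  have hδ : ℵ₀ ≤ δ.card := by
    by_contra! h
    exact hω ((min_le_right _ _).trans (succ_le_of_lt h))
  have hσδ : σ < succ δ.card := by
    by_contra! h
    rw [min_eq_right h] at hreg
    exact hreg (isRegular_succ hδ)
  rw [min_eq_left hσδ.le] at hω hreg hlt ⊢
  have hσ : ℵ₀ ≤ σ := (not_le.1 hω).le
  have hsucc : succ σ ≠ κ := by
    rintro rfl
    have hP := hC σ (lt_succ σ) ((ord_le_ord.2 (lt_succ_iff.1 hσδ)).trans (ord_card_le δ))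
    rw [lift_succ, lt_succ_iff] at hP
    exact hP.not_gt (lift_lt_mk_PSet_self hσ hreg)
  exact ⟨succ σ, isRegular_succ hσ, le_succ σ, (succ_le_of_lt hlt).lt_of_ne hsucc⟩

section PSet

variable {κ θ : Cardinal.{0}} {l δ : Ordinal.{0}}

theorem empty_mem_PSet (hκ : κ ≠ 0) : ∅ ∈ PSet κ l :=
  ⟨empty_subset _, by simpa [pos_iff_ne_zero] using hκ⟩

theorem ne_zero_of_inter_Iio_ord_nonempty {a : Set Ordinal.{0}}
    (h : (a ∩ Iio θ.ord).Nonempty) : θ ≠ 0 := by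
  rintro rfl
  simp at h

theorem inP_empty {a : Set Ordinal.{0}} (h : (a ∩ Iio θ.ord).Nonempty) : inP θ δ a ∅ :=
  ⟨empty_subset _, by simpa using pos_iff_ne_zero.2 (mk_ne_zero_iff.2 h.to_subtype)⟩

theorem nabla_mono {J K : Set (Set (Set Ordinal.{0}))} (h : J ⊆ K) :
    nabla κ l θ δ J ⊆ nabla κ l θ δ K :=
  fun _ ⟨F, hF, hB⟩ => ⟨F, fun e he => h (hF e he), hB⟩

end PSet

section NonCofinalCover

variable {κ θ ν μ : Cardinal.{0}} {l δ : Ordinal.{0}}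

theorem PSet_mem_nabla_Ikl (hκ : ℵ₀ ≤ κ) (hνθ : ν ≤ θ) (hνκ : ν < κ) (hμκ : μ < κ)
    (hκl : κ.ord ≤ l) (hμδ : μ.ord ≤ δ) (hbig : lift.{1} κ ≤ #(PSet ν μ.ord)) :
    PSet κ l ∈ nabla κ l θ δ (Ikl κ l) := by
  obtain ⟨G⟩ : Nonempty (Iio κ.ord ↪ PSet ν μ.ord) := by rwa [← mk_Iio_ord] at hbig
  set s := Iio (max ν μ).ord
  have hs : #s < lift.{1} κ := by
    rw [mk_Iio_ord]
    exact lift_lt.2 (max_lt hνκ hμκ)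
  -- `x e` adds to `s` the index `ξ` of `e`, if any.
  let x : Set Ordinal.{0} → Set Ordinal.{0} :=
    fun e => s ∪ {ξ | ∃ hξ : ξ < κ.ord, (G ⟨ξ, hξ⟩ : Set Ordinal.{0}) = e}
  have hx : ∀ e, x e ∈ PSet κ l := fun e => by
    have hindex : {ξ | ∃ hξ : ξ < κ.ord, (G ⟨ξ, hξ⟩ : Set Ordinal.{0}) = e}.Subsingleton := by
      rintro ξ ⟨hξ, rfl⟩ ξ' ⟨hξ', he⟩
      exact congrArg Subtype.val (G.injective (Subtype.ext he)).symm
    have hκ' : ℵ₀ ≤ lift.{1} κ := aleph0_le_lift.2 hκ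
    refine ⟨union_subset (Iio_subset_Iio ((ord_lt_ord.2 (max_lt hνκ hμκ)).le.trans hκl))
      fun ξ ⟨hξ, _⟩ => hξ.trans_le hκl, (mk_union_le _ _).trans_lt (add_lt_of_lt hκ' hs ?_)⟩
    exact (mk_le_one_iff_set_subsingleton.2 hindex).trans_lt (one_lt_aleph0.trans_le hκ')
  refine ⟨fun e => {a | a ∈ PSet κ l ∧ ¬x e ⊆ a},
    fun e _ => ⟨fun _ ha => ha.1, x e, hx e, fun _ hb h => hb.2 h⟩, fun a ha => ?_⟩
  rcases eq_empty_or_nonempty (a ∩ Iio θ.ord) with hθa | hθa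
  · exact Or.inl ⟨ha, hθa⟩
  refine Or.inr (mem_iUnion₂.2 ?_)
  by_cases hsa : s ⊆ a
  · obtain ⟨ξ, hξ, hξa⟩ := not_subset.1 fun h : Iio κ.ord ⊆ a =>
      (mk_le_mk_of_subset h).not_gt (by rw [mk_Iio_ord]; exact ha.2)
    obtain ⟨heμ, heν⟩ := (G ⟨ξ, hξ⟩).2
    have hνa : Iio ν.ord ⊆ a ∩ Iio θ.ord := fun ζ hζ =>
      ⟨hsa (hζ.trans_le (ord_le_ord.2 (le_max_left _ _))), hζ.trans_le (ord_le_ord.2 hνθ)⟩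
    refine ⟨G ⟨ξ, hξ⟩, ⟨heμ.trans (Iio_subset_Iio hμδ), heν.trans_le (lift_le.2 hνθ)⟩,
      ⟨ha, fun h => hξa (h (Or.inr ⟨hξ, rfl⟩))⟩, fun ζ hζ => ⟨?_, (heμ hζ).trans_le hμδ⟩,
      heν.trans_le (mk_Iio_ord ν ▸ mk_le_mk_of_subset hνa)⟩
    exact hsa ((heμ hζ).trans_le (ord_le_ord.2 (le_max_right _ _)))
  · exact ⟨∅, empty_mem_PSet (ne_zero_of_inter_Iio_ord_nonempty hθa),
      ⟨ha, fun h => hsa (subset_union_left.trans h)⟩, inP_empty hθa⟩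

end NonCofinalCover

theorem mk_PSet_thetaBar_lt_of_isNormalIdeal {κ lam θ μ : Cardinal.{0}} {δ : Ordinal.{0}}
    (hκ : κ.IsRegular) (hkl : κ ≤ lam) {J : Set (Set (Set Ordinal.{0}))}
    (hJ : IsNormalIdeal κ lam.ord θ δ J) (hμκ : μ < κ) (hμδ : μ.ord ≤ δ) :
    #(PSet (thetaBar κ θ) μ.ord) < lift.{1} κ := by
  by_contra! hbig
  have hκ0 := hκ.pos.ne'
  have hsub : PSet (thetaBar κ θ) μ.ord ⊆ PSet (min (thetaBar κ θ) (succ μ)) μ.ord :=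
    fun e ⟨he, heθ⟩ => ⟨he, by
      rw [lift_min, lift_succ]
      exact lt_min heθ ((mk_Iio_ord μ ▸ mk_le_mk_of_subset he).trans_lt (lt_succ _))⟩
  have hnull := nabla_mono hJ.1.nonCofinal_subset <| PSet_mem_nabla_Ikl hκ.aleph0_le
    ((min_le_left _ _).trans (thetaBar_le hκ0)) (min_thetaBar_succ_lt hκ0 (Or.inl hμκ)) hμκ
    (ord_le_ord.2 hkl) hμδ (hbig.trans (mk_le_mk_of_subset hsub))
  exact hJ.1.univ_not_mem (hJ.2 ▸ hnull)

section ClosureIdeal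

variable {κ θ : Cardinal.{0}} {l δ : Ordinal.{0}}

def IsClosedUnder (θ : Cardinal.{0}) (δ : Ordinal.{0})
    (f : List (Set Ordinal.{0}) → Set Ordinal.{0}) (a : Set Ordinal.{0}) : Prop :=
  ∀ es : List (Set Ordinal.{0}), (∀ e ∈ es, inP θ δ a e) → f es ⊆ a

/-- Closure under lists rather than single sets makes this ideal normal: a diagonal union of sets
witnessed by functions `g e` is witnessed by `e :: es ↦ g e es`. -/
def closureIdeal (κ : Cardinal.{0}) (l : Ordinal.{0}) (θ : Cardinal.{0}) (δ : Ordinal.{0}) :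
    Set (Set (Set Ordinal.{0})) :=
  {B | B ⊆ PSet κ l ∧ ∃ f : List (Set Ordinal.{0}) → Set Ordinal.{0}, (∀ es, f es ∈ PSet κ l) ∧
    ∀ a ∈ B, (a ∩ Iio θ.ord).Nonempty → ¬IsClosedUnder θ δ f a}

theorem sUnion_mem_closureIdeal (hκ : κ.IsRegular) {Y : Set (Set (Set Ordinal.{0}))}
    (hY : Y ⊆ closureIdeal κ l θ δ) (hYκ : #Y < lift.{1} κ) : ⋃₀ Y ∈ closureIdeal κ l θ δ := by
  choose f hfP hf using fun B : Y => (hY B.2).2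
  refine ⟨sUnion_subset fun B hB => (hY hB).1, fun es => ⋃ B : Y, f B es, fun es =>
    ⟨iUnion_subset fun B => (hfP B es).1,
      (card_iUnion_lt_iff_forall_of_isRegular hκ.lift hYκ).2 fun B => (hfP B es).2⟩, ?_⟩
  rintro a ⟨B, hB, haB⟩ hθa hclosed
  exact hf ⟨B, hB⟩ a haB hθa fun es hes => (subset_iUnion (f · es) ⟨B, hB⟩).trans (hclosed es hes)

theorem Ikl_subset_closureIdeal : Ikl κ l ⊆ closureIdeal κ l θ δ := by
  rintro B ⟨hB, a₀, ha₀, hBa₀⟩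
  exact ⟨hB, fun _ => a₀, fun _ => ha₀, fun a ha _ hclosed => hBa₀ a ha (hclosed [] (by simp))⟩

theorem isIdeal_closureIdeal (hκ : κ.IsRegular)
    (hex : ∀ f : List (Set Ordinal.{0}) → Set Ordinal.{0}, (∀ es, f es ∈ PSet κ l) →
      ∃ a ∈ PSet κ l, (a ∩ Iio θ.ord).Nonempty ∧ IsClosedUnder θ δ f a) :
    IsIdeal κ l (closureIdeal κ l θ δ) where
  mem_subset _ hB := hB.1
  subset_mem _ hB _ hCB :=
    ⟨hCB.trans hB.1, hB.2.imp fun _ hf => ⟨hf.1, fun a ha => hf.2 a (hCB ha)⟩⟩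
  sUnion_mem Y hY _ hYκ := sUnion_mem_closureIdeal hκ hY hYκ
  nonCofinal_subset := Ikl_subset_closureIdeal
  univ_not_mem := by
    rintro ⟨-, f, hfP, hf⟩
    obtain ⟨a, ha, hθa, hclosed⟩ := hex f hfP
    exact hf a ha hθa hclosed

theorem isNormal_closureIdeal (hκ : κ ≠ 0) : IsNormal κ l θ δ (closureIdeal κ l θ δ) := by
  apply subset_antisymm
  · refine fun B hB => ⟨fun _ => B, fun _ _ => hB, fun a ha => ?_⟩
    rcases eq_empty_or_nonempty (a ∩ Iio θ.ord) with hθa | hθa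
    · exact Or.inl ⟨hB.1 ha, hθa⟩
    · exact Or.inr (mem_biUnion (empty_mem_PSet (ne_zero_of_inter_Iio_ord_nonempty hθa))
        ⟨ha, inP_empty hθa⟩)
  · rintro B ⟨F, hF, hBF⟩
    choose g hgP hg using fun e : PSet θ δ => (hF e.1 e.2).2
    classical
    let f : List (Set Ordinal.{0}) → Set Ordinal.{0}
      | [] => ∅
      | e :: es => if he : e ∈ PSet θ δ then g ⟨e, he⟩ es else ∅
    refine ⟨fun a ha => ?_, f, fun es => ?_, fun a ha hθa hclosed => ?_⟩
    · rcases hBF ha with ha | ha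
      · exact ha.1
      · obtain ⟨e, he, ha, -⟩ := mem_iUnion₂.1 ha
        exact (hF e he).1 ha
    · rcases es with _ | ⟨e, es⟩
      · exact empty_mem_PSet hκ
      · by_cases he : e ∈ PSet θ δ
        · simpa [f, he] using hgP ⟨e, he⟩ es
        · simpa [f, he] using empty_mem_PSet hκ
    · rcases hBF ha with ha' | ha'
      · exact hθa.ne_empty ha'.2
      obtain ⟨e, he, haF, hae⟩ := mem_iUnion₂.1 ha'
      refine hg ⟨e, he⟩ a haF hθa fun es hes => ?_
      simpa [f, he] using hclosed (e :: es) (by simpa [hae] using hes)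

end ClosureIdeal

section ClosurePoints

variable {κ θ σ : Cardinal.{0}} {l δ : Ordinal.{0}} {f : List (Set Ordinal.{0}) → Set Ordinal.{0}}

def closureStep (σ : Cardinal.{0}) (δ : Ordinal.{0}) (f : List (Set Ordinal.{0}) → Set Ordinal.{0})
    (x : Set Ordinal.{0}) : Set Ordinal.{0} :=
  insert 0 (x ∪ ⋃ es ∈ {es : List (Set Ordinal.{0}) |
    ∀ e ∈ es, e ∈ {e | e ⊆ x ∩ Iio δ ∧ #e < lift.{1} σ}}, f es)

theorem subset_closureStep (x : Set Ordinal.{0}) : x ⊆ closureStep σ δ f x :=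
  subset_union_left.trans (subset_insert _ _)

theorem monotone_closureStep : Monotone (closureStep σ δ f) := by
  intro x y hxy
  refine insert_subset_insert (union_subset_union hxy (biUnion_mono (fun es hes e he => ?_)
    fun _ _ => subset_rfl))
  exact ⟨(hes e he).1.trans (inter_subset_inter_left _ hxy), (hes e he).2⟩

theorem mk_closureStep_lt (hκ : κ.IsRegular) (hκω : ℵ₀ < κ)
    (hC : ∀ μ < κ, μ.ord ≤ δ → #(PSet σ μ.ord) < lift.{1} κ) (hf : ∀ es, f es ∈ PSet κ l)
    {x : Set Ordinal.{0}} (hx : #x < lift.{1} κ) : #(closureStep σ δ f x) < lift.{1} κ := by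
  have hκ' := hκ.lift.{1}
  have hsmall : #{e | e ⊆ x ∩ Iio δ ∧ #e < lift.{1} σ} < lift.{1} κ :=
    mk_setOf_subset_mk_lt_lt_of_mk_PSet_lt hC inter_subset_right
      ((mk_le_mk_of_subset inter_subset_left).trans_lt hx)
  have hlists := (mk_setOf_list_forall_mem_le _).trans_lt (max_lt (aleph0_lt_lift.2 hκω) hsmall)
  have hU := (card_biUnion_lt_iff_forall_of_isRegular hκ' hlists).2 fun es _ => (hf es).2
  exact mk_insert_le.trans_lt (add_lt_of_lt hκ'.aleph0_le
    ((mk_union_le _ _).trans_lt (add_lt_of_lt hκ'.aleph0_le hx hU))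
    (one_lt_aleph0.trans_le hκ'.aleph0_le))

theorem mk_inter_Iio_ord_le (hσ : ∀ c < κ, min c θ ≤ σ) {a : Set Ordinal.{0}}
    (ha : #a < lift.{1} κ) : #↥(a ∩ Iio θ.ord) ≤ lift.{1} σ := by
  obtain ⟨c, hc⟩ := mem_range_lift_of_le ha.le
  calc #↥(a ∩ Iio θ.ord) ≤ min #a #(Iio θ.ord) :=
        le_min (mk_le_mk_of_subset inter_subset_left) (mk_le_mk_of_subset inter_subset_right)
    _ = lift.{1} (min c θ) := by rw [← hc, mk_Iio_ord, lift_min]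
    _ ≤ lift.{1} σ := lift_le.2 (hσ c (lift_lt.1 (hc ▸ ha)))

theorem exists_closurePoint (hκ : κ.IsRegular) (hκω : ℵ₀ < κ) (hl : 0 < l) (hθ : θ ≠ 0)
    (hσ : ∀ c < κ, min c θ ≤ σ) (hσκ : min σ (succ δ.card) < κ)
    (hC : ∀ μ < κ, μ.ord ≤ δ → #(PSet σ μ.ord) < lift.{1} κ) (hf : ∀ es, f es ∈ PSet κ l) :
    ∃ a ∈ PSet κ l, (a ∩ Iio θ.ord).Nonempty ∧ IsClosedUnder θ δ f a := by
  obtain ⟨ρ, hρ, hσρ, hρκ⟩ := exists_isRegular_min_le_lt hκω hσκ hC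
  set Φ := closureStep σ δ f
  set a := ⋃ i : Iio ρ.ord, transfiniteIterate Φ i
  have ha : #a < lift.{1} κ := by
    refine (card_iUnion_lt_iff_forall_of_isRegular hκ.lift ?_).2 fun i =>
      mk_transfiniteIterate_lt Φ hκ.lift (fun x hx => mk_closureStep_lt hκ hκω hC hf hx) ?_
    · rwa [mk_Iio_ord, lift_lt]
    · exact lift_lt.2 ((lt_ord.1 i.2).trans hρκ)
  have hal : a ⊆ Iio l := iUnion_subset fun i => transfiniteIterate_subset Φ
    (fun x hx => insert_subset hl (union_subset hx (iUnion₂_subset fun es _ => (hf es).1))) i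
  have h0 : 0 ∈ a := mem_iUnion.2 ⟨⟨0, hρ.ord_pos⟩, by
    rw [transfiniteIterate_eq]
    exact mem_insert _ _⟩
  refine ⟨a, ⟨hal, ha⟩, ⟨0, h0, ord_pos.2 (pos_iff_ne_zero.2 hθ)⟩, fun es hes => ?_⟩
  set u := ⋃ e ∈ {e | e ∈ es}, e
  have hsmall : ∀ e ∈ es, e ⊆ u ∩ Iio δ ∧ #e < lift.{1} σ := fun e he =>
    ⟨subset_inter (subset_biUnion_of_mem (u := id) he) ((hes e he).1.trans inter_subset_right),
      (hes e he).2.trans_le (mk_inter_Iio_ord_le hσ ha)⟩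
  have hu : #u < lift.{1} ρ := by
    refine (card_biUnion_lt_iff_forall_of_isRegular hρ.lift
      ((List.finite_toSet es).lt_aleph0.trans_le (aleph0_le_lift.2 hρ.aleph0_le))).2 fun e he => ?_
    have hδ : #e ≤ lift.{1} δ.card :=
      mk_Iio_ordinal δ ▸ mk_le_mk_of_subset ((hsmall e he).1.trans inter_subset_right)
    refine lt_of_lt_of_le ?_ (lift_le.2 hσρ)
    rw [lift_min, lift_succ]
    exact lt_min (hsmall e he).2 (hδ.trans_lt (lt_succ _))
  have hua : u ⊆ a := iUnion₂_subset fun e he => (hes e he).1.trans inter_subset_left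
  calc f es ⊆ Φ u := (subset_biUnion_of_mem (u := f)
        (show es ∈ {es | ∀ e ∈ es, e ∈ {e | e ⊆ u ∩ Iio δ ∧ #e < lift.{1} σ}} from hsmall)).trans
        (subset_union_right.trans (subset_insert _ _))
    _ ⊆ a := subset_iUnion_transfiniteIterate Φ hρ monotone_closureStep subset_closureStep hua hu

theorem isNormalIdeal_closureIdeal (hκ : κ.IsRegular) (hκω : ℵ₀ < κ) (hl : 0 < l)
    (hθ : θ ≠ 0) (hσ : ∀ c < κ, min c θ ≤ σ) (hσκ : min σ (succ δ.card) < κ)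
    (hC : ∀ μ < κ, μ.ord ≤ δ → #(PSet σ μ.ord) < lift.{1} κ) :
    IsNormalIdeal κ l θ δ (closureIdeal κ l θ δ) :=
  ⟨isIdeal_closureIdeal hκ fun _ hf => exists_closurePoint hκ hκω hl hθ hσ hσκ hC hf,
    isNormal_closureIdeal hκ.pos.ne'⟩

end ClosurePoints

theorem stmt4_general (κ lam θ : Cardinal.{0}) (δ : Ordinal.{0})
    (hκ : κ.IsRegular) (hκω : ℵ₀ < κ) (hkl : κ ≤ lam) (hθ2 : 2 ≤ θ)
    (hcase : δ < κ.ord ∨ θ < κ ∨ ¬ Order.IsSuccLimit κ) :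
    (∃ J, IsNormalIdeal κ lam.ord θ δ J) ↔
      ∀ μ : Cardinal.{0}, μ < κ → μ.ord ≤ δ →
        #↥(PSet (thetaBar κ θ) μ.ord) < Cardinal.lift.{1} κ := by
  have hκ0 : κ ≠ 0 := hκ.pos.ne'
  refine ⟨fun ⟨J, hJ⟩ μ hμκ hμδ => mk_PSet_thetaBar_lt_of_isNormalIdeal hκ hkl hJ hμκ hμδ,
    fun hC => ⟨_, isNormalIdeal_closureIdeal hκ hκω ?_ ?_ (fun _ hc => min_le_thetaBar hκ0 hc)
      (min_thetaBar_succ_lt hκ0 ?_) hC⟩⟩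
  · exact ord_pos.2 (hκ.pos.trans_le hkl)
  · exact (two_pos.trans_le hθ2).ne'
  · rwa [← lt_ord]

/-- Assume `κ > ω`, and assume that `δ < κ`, or `θ < κ`, or `κ` is not a limit
cardinal. Then there exists a `[δ]^{<θ}`-normal ideal on `P_κ(λ)` iff `|P_θ̄(μ)| < κ` for every
cardinal `μ` with `μ < κ` and `μ ≤ δ`. -/
theorem stmt4 (κ lam θ : Cardinal.{0}) (δ : Ordinal.{0})
    (hκ : κ.IsRegular) (hκω : ℵ₀ < κ) (hkl : κ ≤ lam) (hθ2 : 2 ≤ θ) (hθκ : θ ≤ κ)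
    (hδ1 : 1 ≤ δ) (hdl : δ ≤ lam.ord)
    (hcase : δ < κ.ord ∨ θ < κ ∨ ¬ Order.IsSuccLimit κ) :
    (∃ J, IsNormalIdeal κ lam.ord θ δ J) ↔
      ∀ μ : Cardinal.{0}, μ < κ → μ.ord ≤ δ →
        #↥(PSet (thetaBar κ θ) μ.ord) < Cardinal.lift.{1} κ :=
  stmt4_general κ lam θ δ hκ hκω hkl hθ2 hcase

end PklNormal
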